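/- Define σ*(t) = inf{ ℙ((ζ−t,V) ∈ C)/(ν_γ×μ)(C) : C ∈ 𝔅_{ℝ₊}⊗𝒮, (ν_γ×μ)(C) > 0 } for t ∈ ℝ₊. Then σ* takes values in [0,1] and the function t ↦ σ*(t)e^{γt} is nondecreasing and right-continuous on ℝ₊. -/

import Mathlib

open MeasureTheory ProbabilityTheory Real Set
open scoped ENNReal

/-- The exponential distribution on `[0, ∞)` with mean `γ⁻¹` (rate `γ`), as a measure on `ℝ`. -/
noncomputable def expν (γ : ℝ) : Measure ℝ :=
  MeasureTheory.volume.withDensity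
    (fun x => if 0 ≤ x then ENNReal.ofReal (γ * Real.exp (-γ * x)) else 0)

/-!
With `X = (ζ, V)` and `m = ν_γ × μ` we have `σ*(t) = ratioInf P (X - (t, 0)) m`. Translating the
test sets by `(t, 0)` gives `σ*(t) = ratioInf P X (m ∘ τ_t⁻¹)` with `τ_t (x, s) = (x + t, s)`, and
by the memorylessness of `ν_γ`, `m ∘ τ_t⁻¹ = e^{γt} m|_{[t,∞) × S}`. Hence
`σ*(t) e^{γt} = ratioInf P X (m|_{[t,∞) × S})`. This is nondecreasing in `t` because the
restricted measures decrease, and right-continuous because they converge setwise as `t` decreases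
(`ν_γ` has no atoms) while `ratioInf` is upper semicontinuous under setwise convergence.
-/

open Filter Topology

section RatioInf

variable {Ω α β : Type*} [MeasurableSpace Ω] [MeasurableSpace α] [MeasurableSpace β]
  (P : Measure Ω) (X : Ω → α)

noncomputable def ratioInf (m : Measure α) : ℝ≥0∞ :=
  ⨅ (D : Set α) (_ : MeasurableSet D ∧ 0 < m D), P (X ⁻¹' D) / m D

lemma ratioInf_le_one [IsProbabilityMeasure P] (m : Measure α) [IsProbabilityMeasure m] :
    ratioInf P X m ≤ 1 :=
  (iInf₂_le univ ⟨.univ, by simp⟩).trans (by simp)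

lemma ratioInf_anti {m m' : Measure α} (h : m' ≤ m) : ratioInf P X m ≤ ratioInf P X m' :=
  le_iInf₂ fun D ⟨hD, hpos⟩ =>
    (iInf₂_le D ⟨hD, hpos.trans_le (h D)⟩).trans (ENNReal.div_le_div_left (h D) _)

lemma ratioInf_map_comp (e : α ≃ᵐ β) (m : Measure α) :
    ratioInf P (e ∘ X) (m.map e) = ratioInf P X m := by
  simp only [ratioInf, e.map_apply, preimage_comp]
  conv_lhs => enter [1, D]; rw [← e.measurableSet_preimage]
  exact e.injective.preimage_surjective.iInf_comp
    fun C => ⨅ (_ : MeasurableSet C ∧ 0 < m C), P (X ⁻¹' C) / m C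

lemma ratioInf_smul {c : ℝ≥0∞} (hc₀ : c ≠ 0) (hc : c ≠ ∞) (m : Measure α) :
    ratioInf P X (c • m) = c⁻¹ * ratioInf P X m := by
  simp only [ratioInf, Measure.smul_apply, smul_eq_mul, ENNReal.mul_iInf_of_ne
    (ENNReal.inv_ne_zero.2 hc) (ENNReal.inv_ne_top.2 hc₀), ENNReal.mul_pos_iff,
    pos_iff_ne_zero.2 hc₀, true_and]
  refine iInf_congr fun D => iInf_congr fun _ => ?_
  rw [ENNReal.div_eq_inv_mul, ENNReal.div_eq_inv_mul, ENNReal.mul_inv (.inl hc₀) (.inl hc),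
    mul_assoc]

lemma le_ratioInf_of_tendsto {ι : Type*} {l : Filter ι} [l.NeBot] {m : ι → Measure α}
    {m₀ : Measure α} [IsFiniteMeasure m₀]
    (hm : ∀ D, MeasurableSet D → Tendsto (fun i => m i D) l (𝓝 (m₀ D))) {a : ℝ≥0∞}
    (ha : ∀ᶠ i in l, a ≤ ratioInf P X (m i)) : a ≤ ratioInf P X m₀ := by
  refine le_iInf₂ fun D ⟨hD, hpos⟩ => ?_
  have hpos_ev : ∀ᶠ i in l, 0 < m i D := (hm D hD).eventually (lt_mem_nhds hpos)
  refine ge_of_tendsto (ENNReal.Tendsto.const_div (hm D hD) (.inl (measure_ne_top m₀ D))) ?_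
  filter_upwards [ha, hpos_ev] with i hi hi_pos
  exact hi.trans (iInf₂_le D ⟨hD, hi_pos⟩)

end RatioInf

section HalfLine

variable {Ω α : Type*} [MeasurableSpace Ω] [MeasurableSpace α]
  (P : Measure Ω) (X : Ω → α) (m : Measure α) (f : α → ℝ)

lemma monotone_ratioInf_restrict_Ici :
    Monotone fun t => ratioInf P X (m.restrict (f ⁻¹' Ici t)) := fun _ _ hst =>
  ratioInf_anti P X (Measure.restrict_mono (preimage_mono (Ici_subset_Ici.2 hst)) le_rfl)

variable {m f}

lemma tendsto_restrict_preimage_Ici [IsFiniteMeasure m] (hf : Measurable f) {t : ℝ}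
    (ht : m (f ⁻¹' {t}) = 0) {D : Set α} (hD : MeasurableSet D) :
    Tendsto (fun u => m.restrict (f ⁻¹' Ici u) D) (𝓝[>] t) (𝓝 (m.restrict (f ⁻¹' Ici t) D)) := by
  simp only [Measure.restrict_apply hD]
  refine tendsto_measure_of_ae_tendsto_indicator_of_isFiniteMeasure _
    (hD.inter (hf measurableSet_Ici)) (fun u => hD.inter (hf measurableSet_Ici)) ?_
  filter_upwards [measure_eq_zero_iff_ae_notMem.1 ht] with x hx
  rcases (Ne.lt_or_gt hx : f x < t ∨ t < f x) with hlt | hgt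
  · filter_upwards [self_mem_nhdsWithin] with u (hu : t < u)
    exact iff_of_false (fun h => (hlt.trans hu).not_ge h.2) (fun h => hlt.not_ge h.2)
  · filter_upwards [Ioo_mem_nhdsGT hgt] with u hu
    exact and_congr_right fun _ => iff_of_true hu.2.le hgt.le

lemma continuousWithinAt_ratioInf_restrict_Ici [IsFiniteMeasure m] (hf : Measurable f) {t : ℝ}
    (ht : m (f ⁻¹' {t}) = 0) :
    ContinuousWithinAt (fun u => ratioInf P X (m.restrict (f ⁻¹' Ici u))) (Ici t) t := by
  set g := fun u => ratioInf P X (m.restrict (f ⁻¹' Ici u))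
  have hg := monotone_ratioInf_restrict_Ici P X m f
  have hinf : sInf (g '' Ioi t) = g t := by
    refine le_antisymm ?_ (le_sInf <| forall_mem_image.2 fun u hu => hg hu.le)
    refine le_ratioInf_of_tendsto P X (l := 𝓝[>] t)
      (fun D hD => tendsto_restrict_preimage_Ici hf ht hD) ?_
    filter_upwards [self_mem_nhdsWithin] with u hu using sInf_le (mem_image_of_mem g hu)
  rw [← continuousWithinAt_Ioi_iff_Ici, ContinuousWithinAt, ← hinf]
  exact hg.tendsto_nhdsGT t

end HalfLine

lemma withDensity_map_add_right {G : Type*} [MeasurableSpace G] [AddGroup G] [MeasurableAdd G]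
    (μ : Measure G) [μ.IsAddRightInvariant] {f : G → ℝ≥0∞} (hf : Measurable f) (r : G) :
    (μ.withDensity f).map (· + r) = μ.withDensity fun y => f (y - r) := by
  ext A hA
  have hT : Measurable fun x : G => x + r := measurable_add_const r
  rw [Measure.map_apply hT hA, withDensity_apply _ (hT hA), withDensity_apply _ hA,
    ← (measurePreserving_add_right μ r).setLIntegral_comp_preimage (f := fun y => f (y - r)) hA
      (by simpa only [sub_eq_add_neg, Function.comp_def] using hf.comp (measurable_add_const (-r)))]
  simp

lemma expν_eq_expMeasure (γ : ℝ) : expν γ = expMeasure γ := by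
  rw [expν, expMeasure, gammaMeasure]
  congr 1
  funext x
  change _ = exponentialPDF γ x
  rw [exponentialPDF_eq, neg_mul]
  split_ifs <;> simp

instance (γ : ℝ) : SFinite (expν γ) := by
  unfold expν; infer_instance

instance (γ : ℝ) : NullSingletonClass (expν γ) := by
  unfold expν; infer_instance

lemma expν_map_add_right (γ : ℝ) {r : ℝ} (hr : 0 ≤ r) :
    (expν γ).map (· + r) = ENNReal.ofReal (exp (γ * r)) • (expν γ).restrict (Ici r) := by
  have hdens : Measurable fun x : ℝ => if 0 ≤ x then ENNReal.ofReal (γ * exp (-γ * x)) else 0 :=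
    Measurable.ite measurableSet_Ici (by fun_prop) measurable_const
  rw [expν, withDensity_map_add_right _ hdens, restrict_withDensity measurableSet_Ici,
    ← withDensity_indicator measurableSet_Ici,
    ← withDensity_smul _ (hdens.indicator measurableSet_Ici)]
  congr 1
  funext y
  by_cases hy : r ≤ y
  · rw [if_pos (sub_nonneg.2 hy), Pi.smul_apply, indicator_of_mem (show y ∈ Ici r from hy),
      if_pos (hr.trans hy), smul_eq_mul, ← ENNReal.ofReal_mul (exp_nonneg _)]
    congr 1
    rw [mul_left_comm, ← exp_add]
    ring_nf
  · simp [hy, show ¬ 0 ≤ y - r by linarith]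

lemma expν_prod_map_add_right (γ : ℝ) {S : Type*} [MeasurableSpace S] (μ : Measure S) [SFinite μ]
    {r : ℝ} (hr : 0 ≤ r) :
    ((expν γ).prod μ).map (Prod.map (· + r) id) =
      ENNReal.ofReal (exp (γ * r)) • ((expν γ).prod μ).restrict (Prod.fst ⁻¹' Ici r) := by
  rw [← Measure.map_prod_map _ _ (measurable_add_const r) measurable_id, Measure.map_id,
    expν_map_add_right γ hr, Measure.prod_smul_left, ← prod_univ, ← Measure.prod_restrict,
    Measure.restrict_univ]

lemma ratioInf_sub_mul_exp {Ω S : Type*} [MeasurableSpace Ω] [MeasurableSpace S] (P : Measure Ω)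
    (μ : Measure S) [SFinite μ] (γ : ℝ) (ζ : Ω → ℝ) (V : Ω → S) {t : ℝ} (ht : 0 ≤ t) :
    ratioInf P (fun ω => (ζ ω - t, V ω)) ((expν γ).prod μ) * ENNReal.ofReal (exp (γ * t)) =
      ratioInf P (fun ω => (ζ ω, V ω)) (((expν γ).prod μ).restrict (Prod.fst ⁻¹' Ici t)) := by
  have hc₀ : ENNReal.ofReal (exp (γ * t)) ≠ 0 := by simp [exp_pos]
  let e : ℝ × S ≃ᵐ ℝ × S := (MeasurableEquiv.addRight t).prodCongr (.refl S)
  have hX : e ∘ (fun ω => (ζ ω - t, V ω)) = fun ω => (ζ ω, V ω) := by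
    ext ω <;> simp [e, MeasurableEquiv.prodCongr]
  rw [← ratioInf_map_comp P _ e, hX]
  change ratioInf P _ (((expν γ).prod μ).map (Prod.map (· + t) id)) * _ = _
  rw [expν_prod_map_add_right γ μ ht, ratioInf_smul _ _ hc₀ ENNReal.ofReal_ne_top, mul_comm,
    ← mul_assoc, ENNReal.mul_inv_cancel hc₀ ENNReal.ofReal_ne_top, one_mul]

theorem stmt_3_general {Ω : Type*} [MeasurableSpace Ω] (P : Measure Ω) [IsProbabilityMeasure P]
    {S : Type*} [MeasurableSpace S] (μ : Measure S) [IsProbabilityMeasure μ]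
    (γ : ℝ) (hγ : 0 < γ)
    (ζ : Ω → ℝ) (V : Ω → S)
    (σStar : ℝ → ℝ≥0∞)
    (hσStar : ∀ t, σStar t =
      ⨅ (C : Set (ℝ × S)) (_ : MeasurableSet C ∧ 0 < ((expν γ).prod μ) C),
        P ((fun ω => (ζ ω - t, V ω)) ⁻¹' C) / ((expν γ).prod μ) C) :
    (∀ t, 0 ≤ t → σStar t ≤ 1) ∧
    (∀ s t, 0 ≤ s → s ≤ t →
      σStar s * ENNReal.ofReal (Real.exp (γ * s)) ≤
        σStar t * ENNReal.ofReal (Real.exp (γ * t))) ∧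
    (∀ t, 0 ≤ t →
      ContinuousWithinAt (fun u => σStar u * ENNReal.ofReal (Real.exp (γ * u)))
        (Set.Ici t) t) := by
  have : IsProbabilityMeasure (expν γ) :=
    expν_eq_expMeasure γ ▸ isProbabilityMeasure_expMeasure hγ
  set m := (expν γ).prod μ
  have hσ : ∀ t, 0 ≤ t → σStar t * ENNReal.ofReal (exp (γ * t)) =
      ratioInf P (fun ω => (ζ ω, V ω)) (m.restrict (Prod.fst ⁻¹' Ici t)) := fun t ht =>
    hσStar t ▸ ratioInf_sub_mul_exp P μ γ ζ V ht
  have hfst : ∀ t, m (Prod.fst ⁻¹' {t}) = 0 := fun t => by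
    rw [← Measure.map_apply measurable_fst (measurableSet_singleton t), Measure.map_fst_prod]
    simp
  refine ⟨fun t _ => (hσStar t).trans_le (ratioInf_le_one P _ m), fun s t hs hst => ?_,
    fun t ht => ?_⟩
  · rw [hσ s hs, hσ t (hs.trans hst)]
    exact monotone_ratioInf_restrict_Ici P _ m Prod.fst hst
  · exact (continuousWithinAt_ratioInf_restrict_Ici P _ measurable_fst (hfst t)).congr
      (fun u hu => hσ u (ht.trans hu)) (hσ t ht)

/-- The optimal choice `σ*(t) = inf { ℙ((ζ−t,V) ∈ C)/(ν_γ×μ)(C) }` takes values in `[0,1]`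
and `t ↦ σ*(t)e^{γt}` is nondecreasing and right-continuous on `ℝ₊`. -/
theorem stmt_3 {Ω : Type*} [MeasurableSpace Ω] (P : Measure Ω) [IsProbabilityMeasure P]
    {S : Type*} [MeasurableSpace S] (μ : Measure S) [IsProbabilityMeasure μ]
    (γ : ℝ) (hγ : 0 < γ)
    (ζ : Ω → ℝ) (V : Ω → S) (hζm : Measurable ζ) (hVm : Measurable V)
    (hζ0 : ∀ ω, 0 ≤ ζ ω)
    (σStar : ℝ → ℝ≥0∞)
    (hσStar : ∀ t, σStar t =
      ⨅ (C : Set (ℝ × S)) (_ : MeasurableSet C ∧ 0 < ((expν γ).prod μ) C),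
        P ((fun ω => (ζ ω - t, V ω)) ⁻¹' C) / ((expν γ).prod μ) C) :
    (∀ t, 0 ≤ t → σStar t ≤ 1) ∧
    (∀ s t, 0 ≤ s → s ≤ t →
      σStar s * ENNReal.ofReal (Real.exp (γ * s)) ≤
        σStar t * ENNReal.ofReal (Real.exp (γ * t))) ∧
    (∀ t, 0 ≤ t →
      ContinuousWithinAt (fun u => σStar u * ENNReal.ofReal (Real.exp (γ * u)))
        (Set.Ici t) t) :=
  stmt_3_general P μ γ hγ ζ V σStar hσStar
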